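/- Let T > 0 and let Θ be a mild solution of the critical dissipative quasi-geostrophic equation on [0,T] with data Θ₀, such that ∫₀^T ‖Θ(t)‖_{X¹} dt < ∞ and sup_{0≤t≤T} ‖Θ(t)‖_{X⁰} ≤ r₀ for some r₀ < 1. Then the function t ↦ ‖Θ(t)‖_{X⁰} is nonincreasing on [0,T]; in particular ‖Θ(t)‖_{X⁰} ≤ ‖Θ(s)‖_{X⁰} whenever 0 ≤ s ≤ t ≤ T. -/

import Mathlib

open MeasureTheory Filter
open scoped ENNReal NNReal

noncomputable section

abbrev E2 : Type := EuclideanSpace ℝ (Fin 2)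

/-- Fourier-side `X^σ` norm: `∫ |ξ|^σ |g ξ| dξ` (valued in `ℝ≥0∞`). -/
def Xnorm (σ : ℝ) (g : E2 → ℂ) : ℝ≥0∞ :=
  ∫⁻ ξ : E2, ENNReal.ofReal (‖ξ‖ ^ σ) * ‖g ξ‖₊

/-- Fourier-side quasi-geostrophic nonlinearity `N[Θ]`. -/
def QGN (Θ : ℝ → E2 → ℂ) (z : ℝ) (ξ : E2) : ℂ :=
  ∫ η : E2, (((ξ 0 * η 1 - ξ 1 * η 0) / ‖η‖ : ℝ) : ℂ) * Θ z (ξ - η) * Θ z η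

/-- `Θ` is a mild solution on `[0,T]` with data `Θ₀`. -/
def IsMildSolutionOn (Θ : ℝ → E2 → ℂ) (Θ₀ : E2 → ℂ) (T : ℝ) : Prop :=
  ∀ t ∈ Set.Icc (0:ℝ) T, ∀ᵐ ξ : E2 ∂volume, Θ t ξ =
    ((Real.exp (-(t * ‖ξ‖)) : ℝ) : ℂ) * Θ₀ ξ +
    ∫ z in (0:ℝ)..t, ((Real.exp (-((t - z) * ‖ξ‖)) : ℝ) : ℂ) * QGN Θ z ξ

/-- `Θ` is a global mild solution with data `Θ₀`. -/
def IsGlobalMildSolution (Θ : ℝ → E2 → ℂ) (Θ₀ : E2 → ℂ) : Prop :=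
  ∀ t : ℝ, 0 ≤ t → ∀ᵐ ξ : E2 ∂volume, Θ t ξ =
    ((Real.exp (-(t * ‖ξ‖)) : ℝ) : ℂ) * Θ₀ ξ +
    ∫ z in (0:ℝ)..t, ((Real.exp (-((t - z) * ‖ξ‖)) : ℝ) : ℂ) * QGN Θ z ξ

/-- `Θ ∈ C_b([0,∞), X^σ)`: bounded `X^σ` norm and `L¹`-continuity of `t ↦ |·|^σ Θ(t,·)`. -/
def CbX (σ : ℝ) (Θ : ℝ → E2 → ℂ) : Prop :=
  (⨆ t ∈ Set.Ici (0:ℝ), Xnorm σ (Θ t)) < ⊤ ∧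
  ∀ t ∈ Set.Ici (0:ℝ),
    Tendsto (fun s => ∫⁻ ξ : E2, ENNReal.ofReal (‖ξ‖ ^ σ) * ‖Θ s ξ - Θ t ξ‖₊)
      (nhdsWithin t (Set.Ici 0)) (nhds 0)

/-!
Fix a frequency `ξ`. Restarting the mild formula at time `s` bounds `|Θ(z,ξ)|` by the solution
`M_ξ` of `M' = -|ξ| M + |N[Θ](·,ξ)|` with `M_ξ(s) = |Θ(s,ξ)|`, and this linear equation integrates
to `M_ξ(t) + |ξ| ∫ₛᵗ M_ξ = |Θ(s,ξ)| + ∫ₛᵗ |N[Θ](·,ξ)|`. Integrating over `ξ` gives the energy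
inequality `‖Θ(t)‖_{X⁰} + ∫ₛᵗ ‖Θ‖_{X¹} ≤ ‖Θ(s)‖_{X⁰} + ∫ₛᵗ ‖N[Θ]‖_{X⁰}`. The symbol of `N` is
bounded by `|ξ - η|`, so `‖N[Θ]‖_{X⁰} ≤ ‖Θ‖_{X¹} ‖Θ‖_{X⁰} ≤ ‖Θ‖_{X¹}`, and the dissipation
`∫ₛᵗ ‖Θ‖_{X¹}`, finite by assumption, cancels from both sides.
-/

open Set Real

section Duhamel

lemma lintegral_Ioc_mul_exp_neg {c : ℝ} (hc : 0 ≤ c) {a b : ℝ} (hab : a ≤ b) :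
    ∫⁻ z in Ioc a b, ENNReal.ofReal (c * rexp (-((z - a) * c))) =
      ENNReal.ofReal (1 - rexp (-((b - a) * c))) := by
  have hcont : Continuous fun z : ℝ => c * rexp (-((z - a) * c)) := by fun_prop
  have hderiv : ∀ x ∈ uIcc a b,
      HasDerivAt (fun z => -rexp (-((z - a) * c))) (c * rexp (-((x - a) * c))) x := by
    intro x _
    exact (((hasDerivAt_id' x).sub_const a).mul_const c).fun_neg.exp.fun_neg.congr_deriv
      (by ring)
  rw [← ofReal_integral_eq_lintegral_ofReal hcont.integrableOn_Ioc
    (.of_forall fun z => by positivity), ← intervalIntegral.integral_of_le hab,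
    intervalIntegral.integral_eq_sub_of_hasDerivAt hderiv (hcont.intervalIntegrable a b)]
  simp only [sub_self, zero_mul, neg_zero, exp_zero]
  ring_nf

lemma ofReal_exp_neg_add_ofReal_one_sub {x : ℝ} (hx : 0 ≤ x) :
    ENNReal.ofReal (rexp (-x)) + ENNReal.ofReal (1 - rexp (-x)) = 1 := by
  rw [← ENNReal.ofReal_add (exp_pos _).le (sub_nonneg.2 (exp_le_one_iff.2 (neg_nonpos.2 hx))),
    add_sub_cancel, ENNReal.ofReal_one]

lemma lintegral_Ioc_lintegral_Ioc_swap {F : ℝ → ℝ → ℝ≥0∞} (hF : Measurable (Function.uncurry F))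
    (s t : ℝ) :
    ∫⁻ z in Ioc s t, ∫⁻ w in Ioc s z, F z w = ∫⁻ w in Ioc s t, ∫⁻ z in Icc w t, F z w := by
  let G : ℝ → ℝ → ℝ≥0∞ := fun z w => if s < w ∧ w ≤ z ∧ z ≤ t then F z w else 0
  have hG : Measurable (Function.uncurry G) :=
    Measurable.ite ((measurableSet_lt measurable_const measurable_snd).inter
      ((measurableSet_le measurable_snd measurable_fst).inter
        (measurableSet_le measurable_fst measurable_const))) hF measurable_const
  calc ∫⁻ z in Ioc s t, ∫⁻ w in Ioc s z, F z w = ∫⁻ z, ∫⁻ w, G z w := by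
        simp_rw [← lintegral_indicator measurableSet_Ioc]
        congr 1; ext z
        by_cases hz : z ∈ Ioc s t
        · rw [indicator_of_mem hz]
          congr 1; ext w
          simp only [G, indicator_apply, mem_Ioc] at hz ⊢
          grind
        · rw [indicator_of_notMem hz, eq_comm]
          refine (lintegral_congr fun w => ?_).trans lintegral_zero
          simp only [G, mem_Ioc] at hz ⊢
          grind
    _ = ∫⁻ w, ∫⁻ z, G z w := lintegral_lintegral_swap hG.aemeasurable
    _ = ∫⁻ w in Ioc s t, ∫⁻ z in Icc w t, F z w := by
        simp_rw [← lintegral_indicator measurableSet_Ioc, ← lintegral_indicator measurableSet_Icc]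
        congr 1; ext w
        by_cases hw : w ∈ Ioc s t
        · rw [indicator_of_mem hw]
          congr 1; ext z
          simp only [G, indicator_apply, mem_Ioc, mem_Icc] at hw ⊢
          grind
        · rw [indicator_of_notMem hw]
          refine (lintegral_congr fun z => ?_).trans lintegral_zero
          simp only [G, mem_Ioc] at hw ⊢
          grind

/-- Duhamel's formula for the solution of `M' = -c M + k` on `[s, ∞)` with `M s = f`. -/
def duhamel (c s : ℝ) (f : ℝ≥0∞) (k : ℝ → ℝ≥0∞) (z : ℝ) : ℝ≥0∞ :=
  ENNReal.ofReal (rexp (-((z - s) * c))) * f +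
    ∫⁻ w in Ioc s z, ENNReal.ofReal (rexp (-((z - w) * c))) * k w

lemma measurable_duhamel {X : Type*} [MeasurableSpace X] {c : X → ℝ} (hc : Measurable c)
    {f : X → ℝ≥0∞} (hf : Measurable f) {k : ℝ → X → ℝ≥0∞}
    (hk : Measurable (Function.uncurry k)) (s : ℝ) :
    Measurable fun p : ℝ × X => duhamel (c p.2) s (f p.2) (fun w => k w p.2) p.1 := by
  unfold duhamel
  simp_rw [← lintegral_indicator measurableSet_Ioc, indicator_apply, mem_Ioc]
  refine .add (by fun_prop) (Measurable.lintegral_prod_right ?_)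
  refine Measurable.ite ((measurableSet_lt measurable_const measurable_snd).inter
    (measurableSet_le measurable_snd measurable_fst.fst)) ?_ measurable_const
  exact .mul (by fun_prop) (hk.comp (measurable_snd.prodMk measurable_fst.snd))

/-- The integrated form `M t - M s + c ∫ₛᵗ M = ∫ₛᵗ k` of `M' = -c M + k`. -/
theorem duhamel_add_lintegral_mul_duhamel {c : ℝ} (hc : 0 ≤ c) {s t : ℝ} (hst : s ≤ t)
    (f : ℝ≥0∞) {k : ℝ → ℝ≥0∞} (hk : Measurable k) :
    duhamel c s f k t + ∫⁻ z in Ioc s t, ENNReal.ofReal c * duhamel c s f k z =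
      f + ∫⁻ w in Ioc s t, k w := by
  have hsource : ∫⁻ z in Ioc s t, ∫⁻ w in Ioc s z,
        ENNReal.ofReal (c * rexp (-((z - w) * c))) * k w =
      ∫⁻ w in Ioc s t, ENNReal.ofReal (1 - rexp (-((t - w) * c))) * k w := by
    rw [lintegral_Ioc_lintegral_Ioc_swap (by fun_prop)]
    refine setLIntegral_congr_fun measurableSet_Ioc fun w hw => ?_
    rw [lintegral_mul_const _ (by fun_prop), ← Measure.restrict_congr_set Ioc_ae_eq_Icc,
      lintegral_Ioc_mul_exp_neg hc hw.2]
  have hsplit : ∫⁻ z in Ioc s t, ENNReal.ofReal c * duhamel c s f k z =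
      ENNReal.ofReal (1 - rexp (-((t - s) * c))) * f + ∫⁻ z in Ioc s t, ∫⁻ w in Ioc s z,
        ENNReal.ofReal (c * rexp (-((z - w) * c))) * k w := by
    rw [← lintegral_Ioc_mul_exp_neg hc hst, ← lintegral_mul_const _ (by fun_prop),
      ← lintegral_add_left (by fun_prop)]
    refine lintegral_congr fun z => ?_
    simp_rw [duhamel, mul_add, ← lintegral_const_mul' _ _ ENNReal.ofReal_ne_top, ← mul_assoc,
      ← ENNReal.ofReal_mul hc]
  have hk_split : (∫⁻ w in Ioc s t, ENNReal.ofReal (rexp (-((t - w) * c))) * k w) +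
        ∫⁻ w in Ioc s t, ENNReal.ofReal (1 - rexp (-((t - w) * c))) * k w =
      ∫⁻ w in Ioc s t, k w := by
    rw [← lintegral_add_left (by fun_prop)]
    refine setLIntegral_congr_fun measurableSet_Ioc fun w hw => ?_
    rw [← add_mul, ofReal_exp_neg_add_ofReal_one_sub (mul_nonneg (sub_nonneg.2 hw.2) hc), one_mul]
  rw [hsplit, hsource, duhamel, ← hk_split]
  calc _ = (ENNReal.ofReal (rexp (-((t - s) * c))) + ENNReal.ofReal (1 - rexp (-((t - s) * c))))
        * f + ((∫⁻ w in Ioc s t, ENNReal.ofReal (rexp (-((t - w) * c))) * k w) +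
          ∫⁻ w in Ioc s t, ENNReal.ofReal (1 - rexp (-((t - w) * c))) * k w) := by ring
    _ = _ := by rw [ofReal_exp_neg_add_ofReal_one_sub (mul_nonneg (sub_nonneg.2 hst) hc), one_mul]

end Duhamel

section MildFormula

variable {c s t : ℝ} {u g : ℝ → ℂ}

theorem mild_restart {u₀ : ℂ} (hg : IntervalIntegrable g volume 0 t) (hs : 0 ≤ s) (hst : s ≤ t)
    (hus : u s = (rexp (-(s * c)) : ℂ) * u₀ + ∫ z in 0..s, (rexp (-((s - z) * c)) : ℂ) * g z)
    (hut : u t = (rexp (-(t * c)) : ℂ) * u₀ + ∫ z in 0..t, (rexp (-((t - z) * c)) : ℂ) * g z) :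
    u t = (rexp (-((t - s) * c)) : ℂ) * u s + ∫ z in s..t, (rexp (-((t - z) * c)) : ℂ) * g z := by
  have hfactor : ∀ z : ℝ, (rexp (-((t - z) * c)) : ℂ) =
      (rexp (-((t - s) * c)) : ℂ) * (rexp (-((s - z) * c)) : ℂ) := fun z => by
    rw [← Complex.ofReal_mul, ← exp_add]; ring_nf
  have hint : IntervalIntegrable (fun z => (rexp (-((t - z) * c)) : ℂ) * g z) volume 0 t :=
    hg.continuousOn_mul (by fun_prop)
  have hs_mem : s ∈ uIcc 0 t := mem_uIcc_of_le hs hst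
  rw [hut, ← intervalIntegral.integral_add_adjacent_intervals
    (hint.mono_set (uIcc_subset_uIcc left_mem_uIcc hs_mem))
    (hint.mono_set (uIcc_subset_uIcc hs_mem right_mem_uIcc)), hus]
  have hhead : ∫ z in 0..s, (rexp (-((t - z) * c)) : ℂ) * g z =
      (rexp (-((t - s) * c)) : ℂ) * ∫ z in 0..s, (rexp (-((s - z) * c)) : ℂ) * g z := by
    rw [← intervalIntegral.integral_const_mul]
    congr 1 with z
    rw [hfactor, mul_assoc]
  have hinit : (rexp (-(t * c)) : ℂ) = (rexp (-((t - s) * c)) : ℂ) * (rexp (-(s * c)) : ℂ) := by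
    simpa using hfactor 0
  rw [hhead, hinit]
  ring

theorem enorm_le_duhamel_of_restart (hst : s ≤ t) :
    ‖(rexp (-((t - s) * c)) : ℂ) * u s + ∫ z in s..t, (rexp (-((t - z) * c)) : ℂ) * g z‖ₑ ≤
      duhamel c s ‖u s‖ₑ (fun z => ‖g z‖ₑ) t := by
  have henorm_exp : ∀ x : ℝ, ‖(rexp x : ℂ)‖ₑ = ENNReal.ofReal (rexp x) := fun x => by
    rw [← ofReal_norm, Complex.norm_real, Real.norm_of_nonneg (exp_pos x).le]
  refine (enorm_add_le _ _).trans (add_le_add ?_ ?_)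
  · rw [enorm_mul, henorm_exp]
  · rw [intervalIntegral.integral_of_le hst]
    refine (enorm_integral_le_lintegral_enorm _).trans (lintegral_mono fun z => ?_)
    rw [enorm_mul, henorm_exp]

end MildFormula

lemma Xnorm_zero (g : E2 → ℂ) : Xnorm 0 g = ∫⁻ ξ, ‖g ξ‖ₑ := by
  simp only [Xnorm, Real.rpow_zero, ENNReal.ofReal_one, one_mul, enorm_eq_nnnorm]

lemma Xnorm_one (g : E2 → ℂ) : Xnorm 1 g = ∫⁻ ξ, ENNReal.ofReal ‖ξ‖ * ‖g ξ‖ₑ := by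
  simp only [Xnorm, Real.rpow_one, enorm_eq_nnnorm]

lemma abs_cross_le_norm_mul_norm (a b : E2) : |a 0 * b 1 - a 1 * b 0| ≤ ‖a‖ * ‖b‖ := by
  have hsq : ∀ x : E2, ‖x‖ ^ 2 = x 0 ^ 2 + x 1 ^ 2 := fun x => by
    simp [EuclideanSpace.norm_sq_eq, Fin.sum_univ_two]
  refine abs_le_of_sq_le_sq ?_ (by positivity)
  rw [mul_pow, hsq, hsq]
  nlinarith [sq_nonneg (a 0 * b 0 + a 1 * b 1)]

lemma abs_QGN_symbol_le (ξ η : E2) : |(ξ 0 * η 1 - ξ 1 * η 0) / ‖η‖| ≤ ‖ξ - η‖ := by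
  rcases eq_or_ne η 0 with rfl | hη
  · simp
  have hcross : ξ 0 * η 1 - ξ 1 * η 0 = (ξ - η) 0 * η 1 - (ξ - η) 1 * η 0 := by
    simp only [PiLp.sub_apply]; ring
  rw [abs_div, abs_norm, div_le_iff₀ (norm_pos_iff.2 hη), hcross]
  exact abs_cross_le_norm_mul_norm _ _

section QuasiGeostrophic

variable {Θ : ℝ → E2 → ℂ} {Θ₀ : E2 → ℂ} {T : ℝ}

lemma measurable_uncurry_QGN (hΘ : Measurable (Function.uncurry Θ)) :
    Measurable (Function.uncurry (QGN Θ)) := by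
  have : Measurable fun p : (ℝ × E2) × E2 =>
      (((p.1.2 0 * p.2 1 - p.1.2 1 * p.2 0) / ‖p.2‖ : ℝ) : ℂ) * Θ p.1.1 (p.1.2 - p.2) *
        Θ p.1.1 p.2 := by
    fun_prop
  exact this.stronglyMeasurable.integral_prod_right'.measurable

lemma enorm_QGN_le (z : ℝ) (ξ : E2) :
    ‖QGN Θ z ξ‖ₑ ≤ ∫⁻ η, ENNReal.ofReal ‖ξ - η‖ * ‖Θ z (ξ - η)‖ₑ * ‖Θ z η‖ₑ := by
  refine (enorm_integral_le_lintegral_enorm _).trans (lintegral_mono fun η => ?_)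
  rw [enorm_mul, enorm_mul, ← ofReal_norm, Complex.norm_real, Real.norm_eq_abs]
  gcongr
  exact abs_QGN_symbol_le ξ η

lemma lintegral_enorm_QGN_le {z : ℝ} (hΘz : Measurable (Θ z)) :
    ∫⁻ ξ, ‖QGN Θ z ξ‖ₑ ≤ Xnorm 1 (Θ z) * Xnorm 0 (Θ z) := by
  calc ∫⁻ ξ, ‖QGN Θ z ξ‖ₑ
      ≤ ∫⁻ ξ, ∫⁻ η, ENNReal.ofReal ‖ξ - η‖ * ‖Θ z (ξ - η)‖ₑ * ‖Θ z η‖ₑ :=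
        lintegral_mono fun ξ => enorm_QGN_le z ξ
    _ = ∫⁻ η, (∫⁻ ξ, ENNReal.ofReal ‖ξ - η‖ * ‖Θ z (ξ - η)‖ₑ) * ‖Θ z η‖ₑ := by
        rw [lintegral_lintegral_swap (by fun_prop)]
        simp_rw [← lintegral_mul_const' _ _ enorm_ne_top]
    _ = Xnorm 1 (Θ z) * Xnorm 0 (Θ z) := by
        simp_rw [lintegral_sub_right_eq_self (fun ξ => ENNReal.ofReal ‖ξ‖ * ‖Θ z ξ‖ₑ),
          ← Xnorm_one, Xnorm_zero]
        exact lintegral_const_mul _ (by fun_prop)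

lemma ae_integrableOn_QGN (hΘ : Measurable (Function.uncurry Θ))
    (hN : ∫⁻ z in Ioc 0 T, ∫⁻ ξ, ‖QGN Θ z ξ‖ₑ ≠ ∞) :
    ∀ᵐ ξ, IntegrableOn (fun z => QGN Θ z ξ) (Ioc 0 T) := by
  have hmeas : Measurable fun p : E2 × ℝ => QGN Θ p.2 p.1 :=
    (measurable_uncurry_QGN hΘ).comp (f := Prod.swap) measurable_swap
  have hswap : ∫⁻ ξ, ∫⁻ z in Ioc 0 T, ‖QGN Θ z ξ‖ₑ = ∫⁻ z in Ioc 0 T, ∫⁻ ξ, ‖QGN Θ z ξ‖ₑ :=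
    lintegral_lintegral_swap hmeas.enorm.aemeasurable
  have hfin := ae_lt_top (hmeas.enorm.lintegral_prod_right' (ν := volume.restrict (Ioc 0 T)))
    (hswap ▸ hN)
  filter_upwards [hfin] with ξ hξ
  exact ⟨(hmeas.comp (measurable_const.prodMk measurable_id)).aestronglyMeasurable, hξ⟩

lemma ae_enorm_le_duhamel (hmild : IsMildSolutionOn Θ Θ₀ T)
    (hN : ∀ᵐ ξ, IntegrableOn (fun z => QGN Θ z ξ) (Ioc 0 T)) {s t : ℝ} (hs : 0 ≤ s) (hst : s ≤ t)
    (ht : t ≤ T) :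
    ∀ᵐ ξ, ‖Θ t ξ‖ₑ ≤ duhamel ‖ξ‖ s ‖Θ s ξ‖ₑ (fun z => ‖QGN Θ z ξ‖ₑ) t := by
  filter_upwards [hmild t ⟨hs.trans hst, ht⟩, hmild s ⟨hs, hst.trans ht⟩, hN] with ξ hut hus hNξ
  have hint : IntervalIntegrable (fun z => QGN Θ z ξ) volume 0 t :=
    (intervalIntegrable_iff_integrableOn_Ioc_of_le (hs.trans hst)).2
      (hNξ.mono_set (Ioc_subset_Ioc_right ht))
  rw [mild_restart (u := fun τ => Θ τ ξ) hint hs hst hus hut]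
  exact enorm_le_duhamel_of_restart (u := fun τ => Θ τ ξ) (g := fun z => QGN Θ z ξ) hst

theorem Xnorm_zero_add_lintegral_Xnorm_one_le (hΘ : Measurable (Function.uncurry Θ))
    (hmild : IsMildSolutionOn Θ Θ₀ T) (hN : ∀ᵐ ξ, IntegrableOn (fun z => QGN Θ z ξ) (Ioc 0 T))
    {s t : ℝ} (hs : 0 ≤ s) (hst : s ≤ t) (ht : t ≤ T) :
    Xnorm 0 (Θ t) + ∫⁻ z in Ioc s t, Xnorm 1 (Θ z) ≤
      Xnorm 0 (Θ s) + ∫⁻ z in Ioc s t, ∫⁻ ξ, ‖QGN Θ z ξ‖ₑ := by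
  set M : ℝ → E2 → ℝ≥0∞ := fun z ξ => duhamel ‖ξ‖ s ‖Θ s ξ‖ₑ (fun w => ‖QGN Θ w ξ‖ₑ) z
  have hΘs : Measurable (Θ s) := hΘ.of_uncurry_left
  have hQGN : Measurable (Function.uncurry fun w ξ => ‖QGN Θ w ξ‖ₑ) :=
    (measurable_uncurry_QGN hΘ).enorm
  have hM : Measurable (Function.uncurry M) :=
    measurable_duhamel measurable_norm hΘs.enorm hQGN s
  calc Xnorm 0 (Θ t) + ∫⁻ z in Ioc s t, Xnorm 1 (Θ z)
      ≤ (∫⁻ ξ, M t ξ) + ∫⁻ z in Ioc s t, ∫⁻ ξ, ENNReal.ofReal ‖ξ‖ * M z ξ := by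
        simp_rw [Xnorm_zero, Xnorm_one]
        gcongr ?_ + ?_
        · exact lintegral_mono_ae (ae_enorm_le_duhamel hmild hN hs hst ht)
        · refine setLIntegral_mono' measurableSet_Ioc fun z hz => lintegral_mono_ae ?_
          filter_upwards [ae_enorm_le_duhamel hmild hN hs hz.1.le (hz.2.trans ht)] with ξ hξ
          gcongr
    _ = ∫⁻ ξ, (M t ξ + ∫⁻ z in Ioc s t, ENNReal.ofReal ‖ξ‖ * M z ξ) := by
        rw [lintegral_lintegral_swap ((measurable_norm.comp measurable_snd).ennreal_ofReal.mul
          hM).aemeasurable, lintegral_add_left hM.of_uncurry_left]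
    _ = ∫⁻ ξ, (‖Θ s ξ‖ₑ + ∫⁻ z in Ioc s t, ‖QGN Θ z ξ‖ₑ) := lintegral_congr fun ξ =>
        duhamel_add_lintegral_mul_duhamel (norm_nonneg ξ) hst _ hQGN.of_uncurry_right
    _ = Xnorm 0 (Θ s) + ∫⁻ z in Ioc s t, ∫⁻ ξ, ‖QGN Θ z ξ‖ₑ := by
        rw [lintegral_add_left hΘs.enorm, Xnorm_zero, lintegral_lintegral_swap hQGN.aemeasurable]

end QuasiGeostrophic

theorem qg_X0_norm_nonincreasing_general (T : ℝ) (Θ₀ : E2 → ℂ)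
    (Θ : ℝ → E2 → ℂ) (hmeas : Measurable (Function.uncurry Θ))
    (hmild : IsMildSolutionOn Θ Θ₀ T)
    (hint : (∫⁻ t in Set.Icc (0:ℝ) T, Xnorm 1 (Θ t)) < ⊤)
    (r₀ : ℝ≥0∞) (hr₀ : r₀ < 1)
    (hbound : ∀ t ∈ Set.Icc (0:ℝ) T, Xnorm 0 (Θ t) ≤ r₀) :
    AntitoneOn (fun t => Xnorm 0 (Θ t)) (Set.Icc (0:ℝ) T) := by
  have hQGN_le : ∀ {a b : ℝ}, 0 ≤ a → b ≤ T →
      ∫⁻ z in Ioc a b, ∫⁻ ξ, ‖QGN Θ z ξ‖ₑ ≤ ∫⁻ z in Ioc a b, Xnorm 1 (Θ z) :=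
    fun ha hb => setLIntegral_mono' measurableSet_Ioc fun z hz =>
      calc ∫⁻ ξ, ‖QGN Θ z ξ‖ₑ ≤ Xnorm 1 (Θ z) * Xnorm 0 (Θ z) :=
            lintegral_enorm_QGN_le hmeas.of_uncurry_left
        _ ≤ Xnorm 1 (Θ z) := mul_le_of_le_one_right' <|
            (hbound z ⟨ha.trans hz.1.le, hz.2.trans hb⟩).trans hr₀.le
  have hdissipation_fin : ∀ {a b : ℝ}, 0 ≤ a → b ≤ T → ∫⁻ z in Ioc a b, Xnorm 1 (Θ z) ≠ ⊤ :=
    fun ha hb => ((lintegral_mono_set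
      (Ioc_subset_Icc_self.trans (Icc_subset_Icc ha hb))).trans_lt hint).ne
  have hN := ae_integrableOn_QGN hmeas
    (ne_top_of_le_ne_top (hdissipation_fin le_rfl le_rfl) (hQGN_le le_rfl le_rfl))
  intro s hs t ht hst
  refine (ENNReal.add_le_add_iff_right (hdissipation_fin hs.1 ht.2)).1 ?_
  calc Xnorm 0 (Θ t) + ∫⁻ z in Ioc s t, Xnorm 1 (Θ z)
      ≤ Xnorm 0 (Θ s) + ∫⁻ z in Ioc s t, ∫⁻ ξ, ‖QGN Θ z ξ‖ₑ :=
        Xnorm_zero_add_lintegral_Xnorm_one_le hmeas hmild hN hs.1 hst ht.2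
    _ ≤ Xnorm 0 (Θ s) + ∫⁻ z in Ioc s t, Xnorm 1 (Θ z) := add_le_add_right (hQGN_le hs.1 ht.2) _

/-- if a mild solution stays below some `r₀ < 1` in `X⁰` on `[0,T]`,
then `t ↦ ‖Θ(t)‖_{X⁰}` is nonincreasing on `[0,T]`. -/
theorem qg_X0_norm_nonincreasing (T : ℝ) (hT : 0 < T) (Θ₀ : E2 → ℂ)
    (hmeas₀ : Measurable Θ₀)
    (Θ : ℝ → E2 → ℂ) (hmeas : Measurable (Function.uncurry Θ))
    (hmild : IsMildSolutionOn Θ Θ₀ T)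
    (hint : (∫⁻ t in Set.Icc (0:ℝ) T, Xnorm 1 (Θ t)) < ⊤)
    (r₀ : ℝ≥0∞) (hr₀ : r₀ < 1)
    (hbound : ∀ t ∈ Set.Icc (0:ℝ) T, Xnorm 0 (Θ t) ≤ r₀) :
    AntitoneOn (fun t => Xnorm 0 (Θ t)) (Set.Icc (0:ℝ) T) :=
  qg_X0_norm_nonincreasing_general T Θ₀ Θ hmeas hmild hint r₀ hr₀ hbound

end
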